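/- arXiv:1308.1796 — 4 statements merged into one kernel-verified Lean document; each statement's English description precedes it below -/
import Mathlib

section
/- Assume there are constants N, M > 0 such that |b(t,x)| ≤ N(1 + |x|^{l+1}) and |σ(t,x)|² ≤ M(1 + |x|^{l+2}) for all t ∈ [0,T] and x ∈ ℝ^d. Then there exists a constant C > 0, depending only on N, M and l, such that for every n ≥ 1, t ∈ [0,T] and x ∈ ℝ^d, the Model 2 tamed coefficients satisfy |b_n(t,x)| ≤ min(C n^α (1+|x|), |b(t,x)|) and |σ_n(t,x)|² ≤ min(C n^α (1+|x|²), |σ(t,x)|²), i.e. condition (B-2) holds for Model 2. -/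
/-! With `c = n^α ≥ 1` and `s = |x|^l`, the taming factor is `τ = (1 + s/c)⁻¹ = c / (c + s) ∈ (0, 1]`.
Both growth bounds have the shape `K (1 + s u)` (with `u = |x|` for the drift and `u = |x|²` for the
diffusion), and `1 + s u ≤ (c + s)(1 + u)` because `c ≥ 1`, so `τ (1 + s u) ≤ c (1 + u)`: the factor `s`
of the superlinear growth is absorbed by the denominator. For the squared diffusion bound one uses
`τ² ≤ τ`. -/

/-- Euclidean space ℝ^d. -/
abbrev Vec (d : ℕ) := EuclideanSpace ℝ (Fin d)

/-- d × d₁ matrices with the Hilbert–Schmidt (Frobenius) norm. -/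
abbrev Mat (d d₁ : ℕ) := EuclideanSpace ℝ (Fin d × Fin d₁)

section TamingFactor

variable {c s u : ℝ}

lemma inv_one_add_inv_mul_pos (hc : 0 < c) (hs : 0 ≤ s) : 0 < (1 + c⁻¹ * s)⁻¹ := by
  positivity

lemma inv_one_add_inv_mul_le_one (hc : 0 < c) (hs : 0 ≤ s) : (1 + c⁻¹ * s)⁻¹ ≤ 1 :=
  inv_le_one_of_one_le₀ (le_add_of_nonneg_right (by positivity))

lemma inv_one_add_inv_mul_mul_le (hc : 1 ≤ c) (hs : 0 ≤ s) (hu : 0 ≤ u) :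
    (1 + c⁻¹ * s)⁻¹ * (1 + s * u) ≤ c * (1 + u) := by
  have hc₀ : 0 < c := zero_lt_one.trans_le hc
  have hfactor : (1 + c⁻¹ * s) * (c * (1 + u)) = (c + s) * (1 + u) := by
    field_simp
  rw [inv_mul_le_iff₀ (by positivity), hfactor]
  nlinarith [mul_nonneg (sub_nonneg.2 hc) hu]

variable {E : Type*} [NormedAddCommGroup E] [NormedSpace ℝ E] {K : ℝ} {v : E}

lemma norm_inv_one_add_inv_mul_smul (hc : 0 < c) (hs : 0 ≤ s) :
    ‖(1 + c⁻¹ * s)⁻¹ • v‖ = (1 + c⁻¹ * s)⁻¹ * ‖v‖ := by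
  rw [norm_smul, Real.norm_of_nonneg (inv_one_add_inv_mul_pos hc hs).le]

lemma norm_inv_one_add_inv_mul_smul_le (hc : 1 ≤ c) (hs : 0 ≤ s) (hu : 0 ≤ u)
    (hK : 0 ≤ K) (hv : ‖v‖ ≤ K * (1 + s * u)) :
    ‖(1 + c⁻¹ * s)⁻¹ • v‖ ≤ min (K * c * (1 + u)) ‖v‖ := by
  have hc₀ : 0 < c := zero_lt_one.trans_le hc
  set τ := (1 + c⁻¹ * s)⁻¹
  rw [norm_inv_one_add_inv_mul_smul hc₀ hs]
  refine le_min ?_ (mul_le_of_le_one_left (norm_nonneg v) (inv_one_add_inv_mul_le_one hc₀ hs))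
  calc τ * ‖v‖ ≤ τ * (K * (1 + s * u)) := by gcongr
    _ = K * (τ * (1 + s * u)) := by ring
    _ ≤ K * (c * (1 + u)) := mul_le_mul_of_nonneg_left (inv_one_add_inv_mul_mul_le hc hs hu) hK
    _ = K * c * (1 + u) := by ring

lemma norm_inv_one_add_inv_mul_smul_sq_le (hc : 1 ≤ c) (hs : 0 ≤ s) (hu : 0 ≤ u)
    (hK : 0 ≤ K) (hv : ‖v‖ ^ 2 ≤ K * (1 + s * u)) :
    ‖(1 + c⁻¹ * s)⁻¹ • v‖ ^ 2 ≤ min (K * c * (1 + u)) (‖v‖ ^ 2) := by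
  have hc₀ : 0 < c := zero_lt_one.trans_le hc
  set τ := (1 + c⁻¹ * s)⁻¹
  have hτ : 0 < τ := inv_one_add_inv_mul_pos hc₀ hs
  have hτ₁ : τ ≤ 1 := inv_one_add_inv_mul_le_one hc₀ hs
  have hsq : τ ^ 2 * ‖v‖ ^ 2 ≤ τ * ‖v‖ ^ 2 := by
    gcongr; exact pow_le_of_le_one hτ.le hτ₁ two_ne_zero
  rw [norm_inv_one_add_inv_mul_smul hc₀ hs, mul_pow]
  refine le_min ?_ (hsq.trans (mul_le_of_le_one_left (by positivity) hτ₁))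
  calc τ ^ 2 * ‖v‖ ^ 2 ≤ τ * ‖v‖ ^ 2 := hsq
    _ ≤ τ * (K * (1 + s * u)) := by gcongr
    _ = K * (τ * (1 + s * u)) := by ring
    _ ≤ K * (c * (1 + u)) := mul_le_mul_of_nonneg_left (inv_one_add_inv_mul_mul_le hc hs hu) hK
    _ = K * c * (1 + u) := by ring

end TamingFactor

theorem stmt_7_general (d d₁ : ℕ) (T : ℝ)
    (l : ℝ) (hl : 0 < l)
    (b : ℝ → Vec d → Vec d) (σ : ℝ → Vec d → Mat d d₁)
    (N M : ℝ) (hN : 0 < N)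
    (hb : ∀ t ∈ Set.Icc (0 : ℝ) T, ∀ x : Vec d, ‖b t x‖ ≤ N * (1 + ‖x‖ ^ (l + 1)))
    (hσ : ∀ t ∈ Set.Icc (0 : ℝ) T, ∀ x : Vec d, ‖σ t x‖ ^ 2 ≤ M * (1 + ‖x‖ ^ (l + 2)))
    (α : ℝ) (hα : 0 < α)
    (bn : ℕ → ℝ → Vec d → Vec d) (σn : ℕ → ℝ → Vec d → Mat d d₁)
    (hbn : ∀ n : ℕ, 1 ≤ n → ∀ t : ℝ, ∀ x : Vec d,
      bn n t x = (1 + (n : ℝ) ^ (-α) * ‖x‖ ^ l)⁻¹ • b t x)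
    (hσn : ∀ n : ℕ, 1 ≤ n → ∀ t : ℝ, ∀ x : Vec d,
      σn n t x = (1 + (n : ℝ) ^ (-α) * ‖x‖ ^ l)⁻¹ • σ t x) :
    ∃ C : ℝ, 0 < C ∧ ∀ n : ℕ, 1 ≤ n → ∀ t ∈ Set.Icc (0 : ℝ) T, ∀ x : Vec d,
      ‖bn n t x‖ ≤ min (C * (n : ℝ) ^ α * (1 + ‖x‖)) ‖b t x‖ ∧
      ‖σn n t x‖ ^ 2 ≤ min (C * (n : ℝ) ^ α * (1 + ‖x‖ ^ 2)) (‖σ t x‖ ^ 2) := by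
  have hC : 0 < max N M := lt_max_of_lt_left hN
  refine ⟨max N M, hC, fun n hn t ht x => ?_⟩
  have hc : 1 ≤ (n : ℝ) ^ α := Real.one_le_rpow (by exact_mod_cast hn) hα.le
  have hs : 0 ≤ ‖x‖ ^ l := by positivity
  rw [hbn n hn t x, hσn n hn t x, Real.rpow_neg n.cast_nonneg]
  constructor
  · refine norm_inv_one_add_inv_mul_smul_le hc hs (norm_nonneg x) hC.le ?_
    calc ‖b t x‖ ≤ N * (1 + ‖x‖ ^ (l + 1)) := hb t ht x
      _ ≤ max N M * (1 + ‖x‖ ^ l * ‖x‖) := by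
        rw [Real.rpow_add_one' (norm_nonneg x) (by positivity)]
        gcongr
        exact le_max_left N M
  · refine norm_inv_one_add_inv_mul_smul_sq_le hc hs (sq_nonneg ‖x‖) hC.le ?_
    calc ‖σ t x‖ ^ 2 ≤ M * (1 + ‖x‖ ^ (l + 2)) := hσ t ht x
      _ ≤ max N M * (1 + ‖x‖ ^ l * ‖x‖ ^ 2) := by
        rw [Real.rpow_add' (norm_nonneg x) (by positivity), Real.rpow_two]
        gcongr
        exact le_max_right N M

/-- under polynomial growth of the coefficients, the Model 2 tamed
coefficients satisfy condition (B-2). -/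
theorem stmt_7 (d d₁ : ℕ) (hd : 1 ≤ d) (hd₁ : 1 ≤ d₁) (T : ℝ) (hT : 0 < T)
    (l : ℝ) (hl : 0 < l)
    (b : ℝ → Vec d → Vec d) (σ : ℝ → Vec d → Mat d d₁)
    (N M : ℝ) (hN : 0 < N) (hM : 0 < M)
    (hb : ∀ t ∈ Set.Icc (0 : ℝ) T, ∀ x : Vec d, ‖b t x‖ ≤ N * (1 + ‖x‖ ^ (l + 1)))
    (hσ : ∀ t ∈ Set.Icc (0 : ℝ) T, ∀ x : Vec d, ‖σ t x‖ ^ 2 ≤ M * (1 + ‖x‖ ^ (l + 2)))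
    (α : ℝ) (hα : 0 < α) (hα' : α ≤ 1 / 2)
    (bn : ℕ → ℝ → Vec d → Vec d) (σn : ℕ → ℝ → Vec d → Mat d d₁)
    (hbn : ∀ n : ℕ, 1 ≤ n → ∀ t : ℝ, ∀ x : Vec d,
      bn n t x = (1 + (n : ℝ) ^ (-α) * ‖x‖ ^ l)⁻¹ • b t x)
    (hσn : ∀ n : ℕ, 1 ≤ n → ∀ t : ℝ, ∀ x : Vec d,
      σn n t x = (1 + (n : ℝ) ^ (-α) * ‖x‖ ^ l)⁻¹ • σ t x) :
    ∃ C : ℝ, 0 < C ∧ ∀ n : ℕ, 1 ≤ n → ∀ t ∈ Set.Icc (0 : ℝ) T, ∀ x : Vec d,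
      ‖bn n t x‖ ≤ min (C * (n : ℝ) ^ α * (1 + ‖x‖)) ‖b t x‖ ∧
      ‖σn n t x‖ ^ 2 ≤ min (C * (n : ℝ) ^ α * (1 + ‖x‖ ^ 2)) (‖σ t x‖ ^ 2) :=
  stmt_7_general d d₁ T l hl b σ N M hN hb hσ α hα bn σn hbn hσn
end

section
/- Assume condition (A-6): there are constants p₁ ≥ 2 and l, L > 0 such that for all t ∈ [0,T] and x, y ∈ ℝ^d, 2(x−y)·(b(t,x)−b(t,y)) + (p₁−1)|σ(t,x)−σ(t,y)|² ≤ L|x−y|² and |b(t,x)−b(t,y)| ≤ L(1+|x|^l+|y|^l)|x−y|. Let p satisfy 2 ≤ p < p₁ and let b_n : [0,T] × ℝ^d → ℝ^d and σ_n : [0,T] × ℝ^d → ℝ^{d×d₁} be arbitrary functions. Then there exists a constant C > 0, depending only on p, p₁, l and L, such that for all t ∈ [0,T] and x, y, z ∈ ℝ^d: 2(x−y)·(b(t,x) − b_n(t,z)) + (p−1)|σ(t,x) − σ_n(t,z)|² ≤ C|x−y|² + C(1 + |y|^{2l} + |z|^{2l})|y−z|² + |b(t,z) − b_n(t,z)|²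 + C|σ(t,z) − σ_n(t,z)|². -/
/-!
Split `b t x - bn t z` at `b t y` and `b t z`, and `σ t x - σn t z` at `σ t y` and `σ t z`.
Since `p < p₁`, the weighted inequality
`(p - 1) ‖u + v‖² ≤ (p₁ - 1) ‖u‖² + (p - 1) (p₁ - 1) / (p₁ - p) ‖v‖²`
lets the monotonicity condition at `(x, y)` absorb both the drift and the diffusion increment
between `x` and `y`. The diffusion increment between `y` and `z` is bounded by the monotonicity
condition at `(y, z)` together with the polynomial Lipschitz bound on `b`, and the remaining
cross terms by `2 ⟪u, v⟫ ≤ ‖u‖² + ‖v‖²`.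
-/

open scoped RealInnerProductSpace

section

variable {E F : Type*} [NormedAddCommGroup E] [InnerProductSpace ℝ E] [SeminormedAddCommGroup F]

theorem mul_norm_add_sq_le {a c : ℝ} (ha : 0 < a) (hac : a < c) (u v : F) :
    a * ‖u + v‖ ^ 2 ≤ c * ‖u‖ ^ 2 + a * c / (c - a) * ‖v‖ ^ 2 := by
  have hca : 0 < c - a := sub_pos.mpr hac
  have hsq : c * ‖u‖ ^ 2 + a * c / (c - a) * ‖v‖ ^ 2 - a * (‖u‖ + ‖v‖) ^ 2 =
      ((c - a) * ‖u‖ - a * ‖v‖) ^ 2 / (c - a) := by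
    field_simp
    ring
  calc a * ‖u + v‖ ^ 2 ≤ a * (‖u‖ + ‖v‖) ^ 2 := by gcongr; exact norm_add_le u v
    _ ≤ c * ‖u‖ ^ 2 + a * c / (c - a) * ‖v‖ ^ 2 := by
      have : 0 ≤ ((c - a) * ‖u‖ - a * ‖v‖) ^ 2 / (c - a) := by positivity
      linarith

theorem two_inner_le_norm_sq_add_norm_sq (u v : E) : 2 * ⟪u, v⟫ ≤ ‖u‖ ^ 2 + ‖v‖ ^ 2 := by
  linarith [real_inner_le_norm u v, two_mul_le_add_sq ‖u‖ ‖v‖]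

theorem mul_norm_sq_le_of_two_inner_add_le {c L M : ℝ} {u β : E} {s : F}
    (hmono : 2 * ⟪u, β⟫ + c * ‖s‖ ^ 2 ≤ L * ‖u‖ ^ 2) (hβ : ‖β‖ ≤ M * ‖u‖) :
    c * ‖s‖ ^ 2 ≤ (L + 2 * M) * ‖u‖ ^ 2 := by
  have hinner : -⟪u, β⟫ ≤ M * ‖u‖ ^ 2 :=
    calc -⟪u, β⟫ ≤ ‖u‖ * ‖β‖ := (neg_le_abs _).trans (abs_real_inner_le_norm u β)
      _ ≤ ‖u‖ * (M * ‖u‖) := by gcongr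
      _ = M * ‖u‖ ^ 2 := by ring
  linarith

theorem two_inner_sub_le (b bn : E → E) (x y z : E) :
    2 * ⟪x - y, b x - bn z⟫ ≤
      2 * ⟪x - y, b x - b y⟫ + 2 * ‖x - y‖ ^ 2 + ‖b y - b z‖ ^ 2 + ‖b z - bn z‖ ^ 2 := by
  have hsplit : b x - bn z = (b x - b y) + (b y - b z) + (b z - bn z) := by abel
  rw [hsplit, inner_add_right, inner_add_right]
  linarith [two_inner_le_norm_sq_add_norm_sq (x - y) (b y - b z),
    two_inner_le_norm_sq_add_norm_sq (x - y) (b z - bn z)]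

theorem mul_norm_sub_sq_le {α : Type*} {p p₁ : ℝ} (hp : 1 < p) (hpp₁ : p < p₁) (σ σn : α → F)
    (x y z : α) :
    (p - 1) * ‖σ x - σn z‖ ^ 2 ≤ (p₁ - 1) * ‖σ x - σ y‖ ^ 2 +
      2 * ((p - 1) * (p₁ - 1) / (p₁ - p)) * (‖σ y - σ z‖ ^ 2 + ‖σ z - σn z‖ ^ 2) := by
  have hsplit : σ x - σn z = (σ x - σ y) + ((σ y - σ z) + (σ z - σn z)) := by abel
  have hfar := mul_norm_add_sq_le (sub_pos.2 hp) (sub_lt_sub_right hpp₁ 1)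
    (σ x - σ y) ((σ y - σ z) + (σ z - σn z))
  rw [sub_sub_sub_cancel_right, ← hsplit] at hfar
  have hnear : ‖(σ y - σ z) + (σ z - σn z)‖ ^ 2 ≤ 2 * (‖σ y - σ z‖ ^ 2 + ‖σ z - σn z‖ ^ 2) :=
    (pow_le_pow_left₀ (norm_nonneg _) (norm_add_le _ _) 2).trans add_sq_le
  have hK : 0 ≤ (p - 1) * (p₁ - 1) / (p₁ - p) := by
    apply div_nonneg <;> nlinarith
  calc (p - 1) * ‖σ x - σn z‖ ^ 2
      ≤ (p₁ - 1) * ‖σ x - σ y‖ ^ 2 +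
          (p - 1) * (p₁ - 1) / (p₁ - p) * ‖(σ y - σ z) + (σ z - σn z)‖ ^ 2 := hfar
    _ ≤ (p₁ - 1) * ‖σ x - σ y‖ ^ 2 + (p - 1) * (p₁ - 1) / (p₁ - p) *
          (2 * (‖σ y - σ z‖ ^ 2 + ‖σ z - σn z‖ ^ 2)) := by gcongr
    _ = _ := by ring

theorem two_inner_add_mul_norm_sq_le {p p₁ L M : ℝ} (hp : 1 < p) (hpp₁ : p < p₁)
    {b bn : E → E} {σ σn : E → F} {x y z : E}
    (hxy : 2 * ⟪x - y, b x - b y⟫ + (p₁ - 1) * ‖σ x - σ y‖ ^ 2 ≤ L * ‖x - y‖ ^ 2)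
    (hyz : 2 * ⟪y - z, b y - b z⟫ + (p₁ - 1) * ‖σ y - σ z‖ ^ 2 ≤ L * ‖y - z‖ ^ 2)
    (hb : ‖b y - b z‖ ≤ M * ‖y - z‖) :
    2 * ⟪x - y, b x - bn z⟫ + (p - 1) * ‖σ x - σn z‖ ^ 2 ≤
      (L + 2) * ‖x - y‖ ^ 2 + (M ^ 2 + 2 * (p - 1) / (p₁ - p) * (L + 2 * M)) * ‖y - z‖ ^ 2 +
        ‖b z - bn z‖ ^ 2 + 2 * ((p - 1) * (p₁ - 1) / (p₁ - p)) * ‖σ z - σn z‖ ^ 2 := by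
  have hpp₁' : 0 < p₁ - p := sub_pos.2 hpp₁
  have hb_sq : ‖b y - b z‖ ^ 2 ≤ M ^ 2 * ‖y - z‖ ^ 2 := by
    rw [← mul_pow]
    exact pow_le_pow_left₀ (norm_nonneg _) hb 2
  have hσ_yz : 2 * ((p - 1) * (p₁ - 1) / (p₁ - p)) * ‖σ y - σ z‖ ^ 2 ≤
      2 * (p - 1) / (p₁ - p) * ((L + 2 * M) * ‖y - z‖ ^ 2) := by
    have hκ : 0 ≤ 2 * (p - 1) / (p₁ - p) := div_nonneg (by linarith) hpp₁'.le
    calc 2 * ((p - 1) * (p₁ - 1) / (p₁ - p)) * ‖σ y - σ z‖ ^ 2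
        = 2 * (p - 1) / (p₁ - p) * ((p₁ - 1) * ‖σ y - σ z‖ ^ 2) := by ring
      _ ≤ _ := mul_le_mul_of_nonneg_left (mul_norm_sq_le_of_two_inner_add_le hyz hb) hκ
  linarith [two_inner_sub_le b bn x y z, mul_norm_sub_sq_le hp hpp₁ σ σn x y z]

end

theorem sq_one_add_rpow_add_rpow_le {a c : ℝ} (ha : 0 ≤ a) (hc : 0 ≤ c) (l : ℝ) :
    (1 + a ^ l + c ^ l) ^ 2 ≤ 3 * (1 + a ^ (2 * l) + c ^ (2 * l)) := by
  rw [mul_comm 2 l, Real.rpow_mul ha, Real.rpow_mul hc, Real.rpow_two, Real.rpow_two]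
  nlinarith [sq_nonneg (a ^ l - c ^ l), sq_nonneg (1 - a ^ l), sq_nonneg (1 - c ^ l)]

theorem sq_mul_add_mul_add_two_mul_le {L κ Q P : ℝ} (hL : 0 ≤ L) (hκ : 0 ≤ κ) (hQ : 1 ≤ Q)
    (hQP : Q ^ 2 ≤ 3 * P) :
    (L * Q) ^ 2 + κ * (L + 2 * (L * Q)) ≤ (3 * L ^ 2 + 9 * κ * L) * P := by
  have hdrift : (L * Q) ^ 2 ≤ L ^ 2 * (3 * P) := by rw [mul_pow]; gcongr
  have hgrowth : L + 2 * (L * Q) ≤ 3 * (L * (3 * P)) :=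
    calc L + 2 * (L * Q) ≤ 3 * (L * Q ^ 2) := by
          nlinarith [mul_nonneg hL (sub_nonneg.2 hQ), mul_nonneg hL (mul_nonneg (sub_nonneg.2 hQ)
            (zero_le_one.trans hQ))]
      _ ≤ 3 * (L * (3 * P)) := by gcongr
  linarith [mul_le_mul_of_nonneg_left hgrowth hκ]

theorem stmt_11_general (d d₁ : ℕ) (T : ℝ)
    (b : ℝ → Vec d → Vec d) (σ : ℝ → Vec d → Mat d d₁)
    (p₁ l L : ℝ) (hL : 0 < L)
    (hMono : ∀ t ∈ Set.Icc (0 : ℝ) T, ∀ x y : Vec d,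
      2 * ⟪x - y, b t x - b t y⟫ + (p₁ - 1) * ‖σ t x - σ t y‖ ^ 2 ≤ L * ‖x - y‖ ^ 2)
    (hLip : ∀ t ∈ Set.Icc (0 : ℝ) T, ∀ x y : Vec d,
      ‖b t x - b t y‖ ≤ L * (1 + ‖x‖ ^ l + ‖y‖ ^ l) * ‖x - y‖)
    (p : ℝ) (hp : 2 ≤ p) (hpp₁ : p < p₁)
    (bn : ℝ → Vec d → Vec d) (σn : ℝ → Vec d → Mat d d₁) :
    ∃ C : ℝ, 0 < C ∧ ∀ t ∈ Set.Icc (0 : ℝ) T, ∀ x y z : Vec d,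
      2 * ⟪x - y, b t x - bn t z⟫ + (p - 1) * ‖σ t x - σn t z‖ ^ 2 ≤
        C * ‖x - y‖ ^ 2 + C * (1 + ‖y‖ ^ (2 * l) + ‖z‖ ^ (2 * l)) * ‖y - z‖ ^ 2 +
          ‖b t z - bn t z‖ ^ 2 + C * ‖σ t z - σn t z‖ ^ 2 := by
  set κ := 2 * (p - 1) / (p₁ - p)
  set K := (p - 1) * (p₁ - 1) / (p₁ - p)
  have hκ : 0 ≤ κ := div_nonneg (by linarith) (by linarith)
  have hK : 0 ≤ K := div_nonneg (by nlinarith) (by linarith)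
  have hκL : 0 ≤ 3 * L ^ 2 + 9 * κ * L := by positivity
  refine ⟨L + 2 + (3 * L ^ 2 + 9 * κ * L) + 2 * K, by linarith, fun t ht x y z => ?_⟩
  have hQ : 1 ≤ 1 + ‖y‖ ^ l + ‖z‖ ^ l := by
    linarith [Real.rpow_nonneg (norm_nonneg y) l, Real.rpow_nonneg (norm_nonneg z) l]
  have hweight := sq_mul_add_mul_add_two_mul_le hL.le hκ hQ
    (sq_one_add_rpow_add_rpow_le (norm_nonneg y) (norm_nonneg z) l)
  calc _ ≤ _ := two_inner_add_mul_norm_sq_le (by linarith) hpp₁ (hMono t ht x y)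
        (hMono t ht y z) (hLip t ht y z)
    _ ≤ _ := by
      gcongr ?_ * _ + ?_ * _ + _ + ?_ * _
      · linarith
      · exact hweight.trans (mul_le_mul_of_nonneg_right (by linarith) (by positivity))
      · exact le_add_of_nonneg_left (by linarith)

/-- under (A-6) and `2 ≤ p < p₁`, the key one-step estimate used in
the rate-of-convergence proof holds with a constant depending only on
`p, p₁, l, L`. -/
theorem stmt_11 (d d₁ : ℕ) (hd : 1 ≤ d) (hd₁ : 1 ≤ d₁) (T : ℝ) (hT : 0 < T)
    (b : ℝ → Vec d → Vec d) (σ : ℝ → Vec d → Mat d d₁)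
    (p₁ l L : ℝ) (hp₁ : 2 ≤ p₁) (hl : 0 < l) (hL : 0 < L)
    (hMono : ∀ t ∈ Set.Icc (0 : ℝ) T, ∀ x y : Vec d,
      2 * ⟪x - y, b t x - b t y⟫ + (p₁ - 1) * ‖σ t x - σ t y‖ ^ 2 ≤ L * ‖x - y‖ ^ 2)
    (hLip : ∀ t ∈ Set.Icc (0 : ℝ) T, ∀ x y : Vec d,
      ‖b t x - b t y‖ ≤ L * (1 + ‖x‖ ^ l + ‖y‖ ^ l) * ‖x - y‖)
    (p : ℝ) (hp : 2 ≤ p) (hpp₁ : p < p₁)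
    (bn : ℝ → Vec d → Vec d) (σn : ℝ → Vec d → Mat d d₁) :
    ∃ C : ℝ, 0 < C ∧ ∀ t ∈ Set.Icc (0 : ℝ) T, ∀ x y z : Vec d,
      2 * ⟪x - y, b t x - bn t z⟫ + (p - 1) * ‖σ t x - σn t z‖ ^ 2 ≤
        C * ‖x - y‖ ^ 2 + C * (1 + ‖y‖ ^ (2 * l) + ‖z‖ ^ (2 * l)) * ‖y - z‖ ^ 2 +
          ‖b t z - bn t z‖ ^ 2 + C * ‖σ t z - σn t z‖ ^ 2 :=
  stmt_11_general d d₁ T b σ p₁ l L hL hMono hLip p hp hpp₁ bn σn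
end

section
/- Assume |ξ| > 0 and let p₀ be a real number with 1 ≤ p₀ ≤ (2λ + |ξ|²)/|ξ|². Then for every x ∈ ℝ^d, 2 x·b(x) + (p₀−1)|σ(x)|² ≤ 2λμ(1 + |x|²); i.e. the 3/2-model coefficients satisfy the coercivity condition (A-4) with constant K = 2λμ. -/
open scoped RealInnerProductSpace

/-!
With `r = |x|`, the drift contributes `2λ(μ - r) r²` and the noise `(p₀ - 1)|ξ|² r³`.
The bound on `p₀` says exactly that `(p₀ - 1)|ξ|² ≤ 2λ`, so the cubic term of the noise is
absorbed by the cubic damping `-2λ r³` of the drift, leaving `2λμ r² ≤ 2λμ(1 + r²)`.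
-/

lemma norm_rpow_three_halves_smul_sq {F : Type*} [NormedAddCommGroup F] [NormedSpace ℝ F]
    {r : ℝ} (hr : 0 ≤ r) (v : F) : ‖r ^ ((3 : ℝ) / 2) • v‖ ^ 2 = r ^ 3 * ‖v‖ ^ 2 := by
  rw [norm_smul, mul_pow, Real.norm_of_nonneg (by positivity), ← Real.rpow_mul_natCast hr]
  norm_num

lemma cubic_damping_bound {lam mu c r : ℝ} (hlam_mu : 0 ≤ lam * mu) (hc : c ≤ 2 * lam)
    (hr : 0 ≤ r) : 2 * (lam * (mu - r) * r ^ 2) + c * r ^ 3 ≤ 2 * lam * mu * (1 + r ^ 2) :=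
  calc 2 * (lam * (mu - r) * r ^ 2) + c * r ^ 3
      = 2 * lam * mu * r ^ 2 + (c - 2 * lam) * r ^ 3 := by ring
    _ ≤ 2 * lam * mu * r ^ 2 := by
        nlinarith [mul_nonpos_of_nonpos_of_nonneg (sub_nonpos.mpr hc) (pow_nonneg hr 3)]
    _ ≤ 2 * lam * mu * (1 + r ^ 2) := by nlinarith

theorem coercive_three_halves_model {E F : Type*} [NormedAddCommGroup E] [InnerProductSpace ℝ E]
    [NormedAddCommGroup F] [NormedSpace ℝ F] {lam mu p₀ : ℝ} {ξ : F}
    (hlam_mu : 0 ≤ lam * mu) (hp₀ : (p₀ - 1) * ‖ξ‖ ^ 2 ≤ 2 * lam) (x : E) :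
    2 * ⟪x, (lam * (mu - ‖x‖)) • x⟫ + (p₀ - 1) * ‖‖x‖ ^ ((3 : ℝ) / 2) • ξ‖ ^ 2
      ≤ 2 * lam * mu * (1 + ‖x‖ ^ 2) := by
  rw [real_inner_smul_right, real_inner_self_eq_norm_sq,
    norm_rpow_three_halves_smul_sq (norm_nonneg x)]
  linarith [cubic_damping_bound hlam_mu hp₀ (norm_nonneg x)]

theorem stmt_14_general (d d₁ : ℕ)
    (lam mu : ℝ) (hlam : 0 < lam) (hmu : 0 < mu)
    (ξ : Mat d d₁) (hξ : 0 < ‖ξ‖)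
    (b : Vec d → Vec d) (σ : Vec d → Mat d d₁)
    (hb : ∀ x : Vec d, b x = (lam * (mu - ‖x‖)) • x)
    (hσ : ∀ x : Vec d, σ x = (‖x‖ ^ ((3 : ℝ) / 2)) • ξ)
    (p₀ : ℝ) (hp₀' : p₀ ≤ (2 * lam + ‖ξ‖ ^ 2) / ‖ξ‖ ^ 2) :
    ∀ x : Vec d,
      2 * ⟪x, b x⟫ + (p₀ - 1) * ‖σ x‖ ^ 2 ≤ 2 * lam * mu * (1 + ‖x‖ ^ 2) := by
  have hnoise : (p₀ - 1) * ‖ξ‖ ^ 2 ≤ 2 * lam := by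
    have := (le_div_iff₀ (by positivity)).mp hp₀'
    linarith
  intro x
  rw [hb, hσ]
  exact coercive_three_halves_model (mul_pos hlam hmu).le hnoise x

/-- the 3/2-model coefficients `b(x) = λx(μ−|x|)`,
`σ(x) = |x|^{3/2} ξ` satisfy the coercivity condition (A-4) with `K = 2λμ`
whenever `1 ≤ p₀ ≤ (2λ + |ξ|²)/|ξ|²`. -/
theorem stmt_14 (d d₁ : ℕ) (hd : 1 ≤ d) (hd₁ : 1 ≤ d₁)
    (lam mu : ℝ) (hlam : 0 < lam) (hmu : 0 < mu)
    (ξ : Mat d d₁) (hξ : 0 < ‖ξ‖)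
    (b : Vec d → Vec d) (σ : Vec d → Mat d d₁)
    (hb : ∀ x : Vec d, b x = (lam * (mu - ‖x‖)) • x)
    (hσ : ∀ x : Vec d, σ x = (‖x‖ ^ ((3 : ℝ) / 2)) • ξ)
    (p₀ : ℝ) (hp₀ : 1 ≤ p₀) (hp₀' : p₀ ≤ (2 * lam + ‖ξ‖ ^ 2) / ‖ξ‖ ^ 2) :
    ∀ x : Vec d,
      2 * ⟪x, b x⟫ + (p₀ - 1) * ‖σ x‖ ^ 2 ≤ 2 * lam * mu * (1 + ‖x‖ ^ 2) :=
  stmt_14_general d d₁ lam mu hlam hmu ξ hξ b σ hb hσ p₀ hp₀'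
end

section
/- Assume |ξ| > 0 and let p₁ be a real number with 1 ≤ p₁ ≤ (λ + |ξ|²)/|ξ|². Then for all x, y ∈ ℝ^d, 2(x−y)·(b(x)−b(y)) + (p₁−1)|σ(x)−σ(y)|² ≤ 2λμ|x−y|²; i.e. the 3/2-model coefficients satisfy the monotonicity condition of (A-6) with constant L = 2λμ. -/
/-!
Write `s = |x|`, `t = |y|`. Since `x·y ≤ st`, the cubic part of the drift contributes
`-λ(s³ + t³ - (s + t) x·y) ≤ -λ(s + t)(s - t)²` to `(x-y)·(b(x)-b(y))`. This negative
term absorbs the noise, because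
`|σ(x) - σ(y)|² = (s^{3/2} - t^{3/2})² |ξ|² ≤ 2(s + t)(s - t)² |ξ|²` (substitute `s = u²`, `t = v²`),
and `(p₁ - 1)|ξ|² ≤ λ` is exactly the assumption on `p₁`.
-/

open scoped RealInnerProductSpace

lemma sq_pow_three_sub_pow_three_le {u v : ℝ} (hu : 0 ≤ u) (hv : 0 ≤ v) :
    (u ^ 3 - v ^ 3) ^ 2 ≤ 2 * (u ^ 2 + v ^ 2) * (u ^ 2 - v ^ 2) ^ 2 := by
  have hquartic : (u ^ 2 + u * v + v ^ 2) ^ 2 ≤ 2 * (u ^ 2 + v ^ 2) * (u + v) ^ 2 := by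
    nlinarith [mul_nonneg hu hv, mul_nonneg (mul_nonneg hu hv) (sq_nonneg (u - v))]
  calc (u ^ 3 - v ^ 3) ^ 2 = (u - v) ^ 2 * (u ^ 2 + u * v + v ^ 2) ^ 2 := by ring
    _ ≤ (u - v) ^ 2 * (2 * (u ^ 2 + v ^ 2) * (u + v) ^ 2) := by gcongr
    _ = 2 * (u ^ 2 + v ^ 2) * (u ^ 2 - v ^ 2) ^ 2 := by ring

lemma rpow_three_halves {a : ℝ} (ha : 0 ≤ a) : a ^ ((3 : ℝ) / 2) = √a ^ 3 := by
  rw [Real.sqrt_eq_rpow, ← Real.rpow_natCast, ← Real.rpow_mul ha]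
  norm_num

lemma sq_rpow_three_halves_sub_le {a b : ℝ} (ha : 0 ≤ a) (hb : 0 ≤ b) :
    (a ^ ((3 : ℝ) / 2) - b ^ ((3 : ℝ) / 2)) ^ 2 ≤ 2 * (a + b) * (a - b) ^ 2 := by
  simpa only [← rpow_three_halves ha, ← rpow_three_halves hb, Real.sq_sqrt ha,
    Real.sq_sqrt hb] using sq_pow_three_sub_pow_three_le (Real.sqrt_nonneg a) (Real.sqrt_nonneg b)

lemma norm_rpow_three_halves_smul_sub_sq_le {F : Type*} [NormedAddCommGroup F]
    [NormedSpace ℝ F] (ξ : F) {a b : ℝ} (ha : 0 ≤ a) (hb : 0 ≤ b) :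
    ‖a ^ ((3 : ℝ) / 2) • ξ - b ^ ((3 : ℝ) / 2) • ξ‖ ^ 2 ≤
      2 * ‖ξ‖ ^ 2 * ((a + b) * (a - b) ^ 2) := by
  rw [← sub_smul, norm_smul, mul_pow, Real.norm_eq_abs, sq_abs]
  nlinarith [sq_rpow_three_halves_sub_le ha hb, sq_nonneg ‖ξ‖]

lemma inner_sub_logistic_sub_le {E : Type*} [NormedAddCommGroup E] [InnerProductSpace ℝ E]
    {lam : ℝ} (hlam : 0 ≤ lam) (mu : ℝ) (x y : E) :
    ⟪x - y, (lam * (mu - ‖x‖)) • x - (lam * (mu - ‖y‖)) • y⟫ ≤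
      lam * mu * ‖x - y‖ ^ 2 - lam * (‖x‖ + ‖y‖) * (‖x‖ - ‖y‖) ^ 2 := by
  have hexpand : ⟪x - y, (lam * (mu - ‖x‖)) • x - (lam * (mu - ‖y‖)) • y⟫ =
      lam * mu * ‖x - y‖ ^ 2 - lam * (‖x‖ ^ 3 + ‖y‖ ^ 3 - (‖x‖ + ‖y‖) * ⟪x, y⟫) := by
    simp only [inner_sub_left, inner_sub_right, inner_smul_right, real_inner_self_eq_norm_sq,
      real_inner_comm y x, norm_sub_sq_real]
    ring
  have hcs : (‖x‖ + ‖y‖) * ⟪x, y⟫ ≤ (‖x‖ + ‖y‖) * (‖x‖ * ‖y‖) :=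
    mul_le_mul_of_nonneg_left (real_inner_le_norm x y) (by positivity)
  rw [hexpand]
  nlinarith

theorem stmt_18_general (d d₁ : ℕ)
    (lam mu : ℝ) (hlam : 0 < lam)
    (ξ : Mat d d₁) (hξ : 0 < ‖ξ‖)
    (b : Vec d → Vec d) (σ : Vec d → Mat d d₁)
    (hb : ∀ x : Vec d, b x = (lam * (mu - ‖x‖)) • x)
    (hσ : ∀ x : Vec d, σ x = (‖x‖ ^ ((3 : ℝ) / 2)) • ξ)
    (p₁ : ℝ) (hp₁ : 1 ≤ p₁) (hp₁' : p₁ ≤ (lam + ‖ξ‖ ^ 2) / ‖ξ‖ ^ 2) :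
    ∀ x y : Vec d,
      2 * ⟪x - y, b x - b y⟫ + (p₁ - 1) * ‖σ x - σ y‖ ^ 2 ≤
        2 * lam * mu * ‖x - y‖ ^ 2 := by
  intro x y
  set r := (‖x‖ + ‖y‖) * (‖x‖ - ‖y‖) ^ 2
  have hr : 0 ≤ r := by positivity
  have hnoise : (p₁ - 1) * ‖ξ‖ ^ 2 ≤ lam := by
    rw [le_div_iff₀ (by positivity)] at hp₁'
    linarith
  have hdrift : ⟪x - y, b x - b y⟫ ≤ lam * mu * ‖x - y‖ ^ 2 - lam * r := by
    simpa only [hb, mul_assoc] using inner_sub_logistic_sub_le hlam.le mu x y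
  have hdiffusion : (p₁ - 1) * ‖σ x - σ y‖ ^ 2 ≤ 2 * lam * r :=
    calc (p₁ - 1) * ‖σ x - σ y‖ ^ 2 ≤ (p₁ - 1) * (2 * ‖ξ‖ ^ 2 * r) := by
          rw [hσ, hσ]
          exact mul_le_mul_of_nonneg_left
            (norm_rpow_three_halves_smul_sub_sq_le ξ (norm_nonneg x) (norm_nonneg y)) (by linarith)
      _ = 2 * ((p₁ - 1) * ‖ξ‖ ^ 2) * r := by ring
      _ ≤ 2 * lam * r := by gcongr
  linarith

/-- the 3/2-model coefficients `b(x) = λx(μ−|x|)`,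
`σ(x) = |x|^{3/2} ξ` satisfy the monotonicity condition of (A-6) with `L = 2λμ`
whenever `1 ≤ p₁ ≤ (λ + |ξ|²)/|ξ|²`. -/
theorem stmt_18 (d d₁ : ℕ) (hd : 1 ≤ d) (hd₁ : 1 ≤ d₁)
    (lam mu : ℝ) (hlam : 0 < lam) (hmu : 0 < mu)
    (ξ : Mat d d₁) (hξ : 0 < ‖ξ‖)
    (b : Vec d → Vec d) (σ : Vec d → Mat d d₁)
    (hb : ∀ x : Vec d, b x = (lam * (mu - ‖x‖)) • x)
    (hσ : ∀ x : Vec d, σ x = (‖x‖ ^ ((3 : ℝ) / 2)) • ξ)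
    (p₁ : ℝ) (hp₁ : 1 ≤ p₁) (hp₁' : p₁ ≤ (lam + ‖ξ‖ ^ 2) / ‖ξ‖ ^ 2) :
    ∀ x y : Vec d,
      2 * ⟪x - y, b x - b y⟫ + (p₁ - 1) * ‖σ x - σ y‖ ^ 2 ≤
        2 * lam * mu * ‖x - y‖ ^ 2 :=
  stmt_18_general d d₁ lam mu hlam ξ hξ b σ hb hσ p₁ hp₁ hp₁'
end
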